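/- Let d be a positive integer, let μ, Δ ∈ ℝ^d with Δ nonzero, let X and Y be independent random vectors each distributed N(μ, I_d), and let Z be distributed N(μ+Δ, I_d), independent of X and Y. Then P(‖Z − X‖² ≤ ‖Y − X‖²) ≤ exp(−‖Δ‖²/64) + 2·exp(−‖Δ‖⁴/(256·d)). -/

import Mathlib

/-!
Chernoff's bound: for `l ≥ 0` the mismatch probability is at most
`E exp (l (‖Y - X‖² - ‖Z - X‖²))`. The law of `((X, Y), Z)` is a product over the coordinates,
so this expectation factors into one-dimensional ones, each an iterated Gaussian integral of
the exponential of a quadratic; completing the square three times gives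
`exp (mismatchLogMGF l Δᵢ)`. For `0 ≤ l ≤ 1/8` the exponent is at most `-l‖Δ‖²/2 + 8dl²`,
and `l = ‖Δ‖²/(32d)` (or `l = 1/8` when `‖Δ‖² > 4d`) yields the two terms of the bound.
-/

open MeasureTheory ProbabilityTheory Real

/-- The Gaussian distribution `N(μ, v·I_d)` on `ℝ^d` (identity covariance scaled by `v`),
realized as the product of one-dimensional Gaussians. -/
noncomputable def gaussianPi {d : ℕ} (μ : Fin d → ℝ) (v : NNReal) :
    Measure (Fin d → ℝ) :=
  Measure.pi fun i => gaussianReal (μ i) v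

theorem lintegral_ofReal_exp_quadratic_gaussianReal {α : ℝ} (hα : α < 1 / 2) (β γ : ℝ) :
    ∫⁻ x, ENNReal.ofReal (exp (α * x ^ 2 + β * x + γ)) ∂gaussianReal 0 1
      = ENNReal.ofReal (exp (β ^ 2 / (2 * (1 - 2 * α)) + γ - log (1 - 2 * α) / 2)) := by
  set k : ℝ := 1 / 2 - α
  have hk : 0 < k := by simp only [k]; linarith
  have hdensity : ∀ x, gaussianPDF 0 1 x * ENNReal.ofReal (exp (α * x ^ 2 + β * x + γ))
      = ENNReal.ofReal ((√(2 * π))⁻¹ *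
          (exp (β ^ 2 / (4 * k) + γ) * exp (-k * (x - β / (2 * k)) ^ 2))) := by
    intro x
    rw [gaussianPDF, ← ENNReal.ofReal_mul (gaussianPDFReal_nonneg _ _ _), gaussianPDFReal,
      ← exp_add, mul_assoc, ← exp_add, NNReal.coe_one, mul_one]
    congr 3
    field_simp
    ring
  rw [gaussianReal_of_var_ne_zero 0 one_ne_zero,
    lintegral_withDensity_eq_lintegral_mul _ (measurable_gaussianPDF 0 1) (by fun_prop)]
  simp_rw [Pi.mul_apply, hdensity]
  rw [← ofReal_integral_eq_lintegral_ofReal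
    ((((integrable_exp_neg_mul_sq hk).comp_sub_right _).const_mul _).const_mul _)
    (Filter.Eventually.of_forall fun x => by positivity), integral_const_mul, integral_const_mul,
    integral_sub_right_eq_self (fun x => exp (-k * x ^ 2)), integral_gaussian]
  congr 1
  rw [show 1 - 2 * α = 2 * k by simp only [k]; ring, exp_sub, exp_half, exp_log (by positivity),
    sqrt_div pi_pos.le, sqrt_mul zero_le_two, sqrt_mul zero_le_two,
    show 2 * (2 * k) = 4 * k by ring]
  field_simp

theorem lintegral_ofReal_exp_mul_add_sq_gaussianReal {c : ℝ} (hc : c < 1 / 2) (b e : ℝ) :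
    ∫⁻ t, ENNReal.ofReal (exp (c * (t + b) ^ 2 + e)) ∂gaussianReal 0 1
      = ENNReal.ofReal (exp (c * b ^ 2 / (1 - 2 * c) + e - log (1 - 2 * c) / 2)) := by
  have hc' : 1 - 2 * c ≠ 0 := by linarith
  simp_rw [show ∀ t, c * (t + b) ^ 2 + e = c * t ^ 2 + 2 * c * b * t + (c * b ^ 2 + e) from
    fun t => by ring]
  rw [lintegral_ofReal_exp_quadratic_gaussianReal hc]
  congr 3
  field_simp
  ring

noncomputable def mismatchLogMGF (l a : ℝ) : ℝ :=
  -(l * (1 - 4 * l) * a ^ 2 / (1 - 12 * l ^ 2)) - log (1 - 12 * l ^ 2) / 2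

theorem lintegral_ofReal_exp_mismatch_centered {l : ℝ} (hl : 12 * l ^ 2 < 1) (a : ℝ) :
    ∫⁻ x, ∫⁻ y, ∫⁻ z, ENNReal.ofReal (exp (l * ((y - x) ^ 2 - (z + a - x) ^ 2)))
      ∂gaussianReal 0 1 ∂gaussianReal 0 1 ∂gaussianReal 0 1
      = ENNReal.ofReal (exp (mismatchLogMGF l a)) := by
  have hplus : 0 < 1 + 2 * l := by nlinarith
  have hminus : 0 < 1 - 2 * l := by nlinarith
  simp_rw [show ∀ x y z, l * ((y - x) ^ 2 - (z + a - x) ^ 2)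
      = -l * (z + (a - x)) ^ 2 + l * (y - x) ^ 2 from fun x y z => by ring,
    lintegral_ofReal_exp_mul_add_sq_gaussianReal (show -l < 1 / 2 by linarith),
    show 1 - 2 * -l = 1 + 2 * l by ring]
  simp_rw [show ∀ x y, -l * (a - x) ^ 2 / (1 + 2 * l) + l * (y - x) ^ 2 - log (1 + 2 * l) / 2
      = l * (y + -x) ^ 2 + (-l * (a - x) ^ 2 / (1 + 2 * l) - log (1 + 2 * l) / 2) from
      fun x y => by ring,
    lintegral_ofReal_exp_mul_add_sq_gaussianReal (show l < 1 / 2 by linarith)]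
  simp_rw [show ∀ x, l * (-x) ^ 2 / (1 - 2 * l) + (-l * (a - x) ^ 2 / (1 + 2 * l)
        - log (1 + 2 * l) / 2) - log (1 - 2 * l) / 2
      = (l / (1 - 2 * l) - l / (1 + 2 * l)) * x ^ 2 + 2 * l * a / (1 + 2 * l) * x
        + (-(l * a ^ 2 / (1 + 2 * l)) - log (1 + 2 * l) / 2 - log (1 - 2 * l) / 2) from
      fun x => by ring]
  have hvariance : 1 - 2 * (l / (1 - 2 * l) - l / (1 + 2 * l))
      = (1 - 12 * l ^ 2) / ((1 + 2 * l) * (1 - 2 * l)) := by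
    field_simp
    ring
  have hpos : 0 < 1 - 2 * (l / (1 - 2 * l) - l / (1 + 2 * l)) := by
    rw [hvariance]; exact div_pos (by linarith) (by positivity)
  rw [lintegral_ofReal_exp_quadratic_gaussianReal (by linarith), hvariance, mismatchLogMGF,
    log_div (by linarith) (by positivity), log_mul hplus.ne' hminus.ne']
  have h12 : 1 - 12 * l ^ 2 ≠ 0 := by linarith
  have hrational : (2 * l * a / (1 + 2 * l)) ^ 2
        / (2 * ((1 - 12 * l ^ 2) / ((1 + 2 * l) * (1 - 2 * l)))) - l * a ^ 2 / (1 + 2 * l)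
      = -(l * (1 - 4 * l) * a ^ 2 / (1 - 12 * l ^ 2)) := by
    generalize hK : 1 - 12 * l ^ 2 = K at h12 ⊢
    field_simp
    rw [← hK]
    ring
  congr 2
  linear_combination hrational

theorem measurePreserving_add_const_gaussianReal (μ : ℝ) (v : NNReal) (c : ℝ) :
    MeasurePreserving (· + c) (gaussianReal μ v) (gaussianReal (μ + c) v) :=
  ⟨measurable_add_const c, gaussianReal_map_add_const c⟩

theorem lintegral_ofReal_exp_mismatch_gaussianReal {l : ℝ} (hl : 12 * l ^ 2 < 1) (m a : ℝ) :
    ∫⁻ p, ENNReal.ofReal (exp (l * ((p.1.2 - p.1.1) ^ 2 - (p.2 - p.1.1) ^ 2)))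
      ∂((gaussianReal m 1).prod (gaussianReal m 1)).prod (gaussianReal (m + a) 1)
      = ENNReal.ofReal (exp (mismatchLogMGF l a)) := by
  have hshift := ((measurePreserving_add_const_gaussianReal 0 1 m).prod
    (measurePreserving_add_const_gaussianReal 0 1 m)).prod
    (measurePreserving_add_const_gaussianReal 0 1 (m + a))
  simp only [zero_add] at hshift
  rw [← hshift.lintegral_comp (by fun_prop), lintegral_prod _ (by fun_prop),
    lintegral_prod _ ?_, ← lintegral_ofReal_exp_mismatch_centered hl a]
  · simp only [Prod.map_apply]
    congr! 8 with x y z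
    ring
  · refine (Measurable.lintegral_prod_right ?_).aemeasurable
    fun_prop

section Pi

variable {ι : Type*} [Fintype ι]

theorem lintegral_pi_prod_eq_prod {α : ι → Type*} [∀ i, MeasurableSpace (α i)]
    (μ : ∀ i, Measure (α i)) [∀ i, IsProbabilityMeasure (μ i)] {f : ∀ i, α i → ENNReal}
    (hf : ∀ i, Measurable (f i)) :
    ∫⁻ x, ∏ i, f i (x i) ∂Measure.pi μ = ∏ i, ∫⁻ t, f i t ∂μ i := by
  rw [lintegral_prod_eq_prod_lintegral_of_indepFun _ _
    (iIndepFun_pi fun i => (hf i).aemeasurable) fun i => (hf i).comp (measurable_pi_apply i)]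
  exact Finset.prod_congr rfl fun i _ => (measurePreserving_eval μ i).lintegral_comp (hf i)

theorem measurePreserving_pi_prod_prod {α β γ : Type*} [MeasurableSpace α] [MeasurableSpace β]
    [MeasurableSpace γ] (μ : ι → Measure α) (ν : ι → Measure β) (ρ : ι → Measure γ)
    [∀ i, SigmaFinite (μ i)] [∀ i, SigmaFinite (ν i)] [∀ i, SigmaFinite (ρ i)] :
    MeasurePreserving (fun w : ι → (α × β) × γ =>
        ((fun i => (w i).1.1, fun i => (w i).1.2), fun i => (w i).2))
      (Measure.pi fun i => ((μ i).prod (ν i)).prod (ρ i))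
      (((Measure.pi μ).prod (Measure.pi ν)).prod (Measure.pi ρ)) :=
  ((measurePreserving_arrowProdEquivProdArrow α β ι μ ν).prod (MeasurePreserving.id _)).comp
    (measurePreserving_arrowProdEquivProdArrow (α × β) γ ι (fun i => (μ i).prod (ν i)) ρ)

theorem lintegral_ofReal_exp_mismatch_pi {l : ℝ} (hl : 12 * l ^ 2 < 1) (m a : ι → ℝ) :
    ∫⁻ p, ENNReal.ofReal
        (exp (l * (∑ i, (p.1.2 i - p.1.1 i) ^ 2 - ∑ i, (p.2 i - p.1.1 i) ^ 2)))
      ∂((Measure.pi fun i => gaussianReal (m i) 1).prod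
          (Measure.pi fun i => gaussianReal (m i) 1)).prod
        (Measure.pi fun i => gaussianReal (m i + a i) 1)
      = ENNReal.ofReal (exp (∑ i, mismatchLogMGF l (a i))) := by
  rw [← (measurePreserving_pi_prod_prod _ _ _).lintegral_comp (by fun_prop)]
  simp only [← Finset.sum_sub_distrib, Finset.mul_sum, exp_sum,
    ENNReal.ofReal_prod_of_nonneg fun i _ => (exp_pos _).le]
  rw [lintegral_pi_prod_eq_prod _ (f := fun _ (t : (ℝ × ℝ) × ℝ) =>
    ENNReal.ofReal (exp (l * ((t.1.2 - t.1.1) ^ 2 - (t.2 - t.1.1) ^ 2)))) fun i => by fun_prop]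
  simp only [lintegral_ofReal_exp_mismatch_gaussianReal hl]

end Pi

theorem measure_le_le_lintegral_exp {α : Type*} [MeasurableSpace α] (ν : Measure α)
    {g h : α → ℝ} (hg : Measurable g) (hh : Measurable h) {t : ℝ} (ht : 0 ≤ t) :
    ν {x | g x ≤ h x} ≤ ∫⁻ x, ENNReal.ofReal (exp (t * (h x - g x))) ∂ν := by
  rw [← lintegral_indicator_one (measurableSet_le hg hh)]
  refine lintegral_mono fun x => Set.indicator_apply_le' (fun hx => ?_) fun _ => zero_le
  exact ENNReal.one_le_ofReal.2 (one_le_exp (mul_nonneg ht (sub_nonneg.2 hx)))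

theorem map_prod_prod_eq_of_indepFun {Ω α β γ : Type*} [MeasurableSpace Ω] [MeasurableSpace α]
    [MeasurableSpace β] [MeasurableSpace γ] {P : Measure Ω} [IsFiniteMeasure P]
    {X : Ω → α} {Y : Ω → β} {Z : Ω → γ}
    (hX : AEMeasurable X P) (hY : AEMeasurable Y P) (hZ : AEMeasurable Z P)
    (hXY : IndepFun X Y P) (hXYZ : IndepFun (fun ω => (X ω, Y ω)) Z P) :
    P.map (fun ω => ((X ω, Y ω), Z ω)) = ((P.map X).prod (P.map Y)).prod (P.map Z) := by
  rw [(indepFun_iff_map_prod_eq_prod_map_map (hX.prodMk hY) hZ).1 hXYZ,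
    (indepFun_iff_map_prod_eq_prod_map_map hX hY).1 hXY]

theorem mismatchLogMGF_le {l : ℝ} (hl0 : 0 ≤ l) (hl : l ≤ 1 / 8) (a : ℝ) :
    mismatchLogMGF l a ≤ -(l * a ^ 2 / 2) + 8 * l ^ 2 := by
  have hK : 0 < 1 - 12 * l ^ 2 := by nlinarith
  have hquadratic : l * a ^ 2 / 2 ≤ l * (1 - 4 * l) * a ^ 2 / (1 - 12 * l ^ 2) := by
    rw [le_div_iff₀ hK]
    have hla : 0 ≤ l * a ^ 2 := mul_nonneg hl0 (sq_nonneg a)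
    nlinarith [mul_nonneg hla (sq_nonneg l)]
  have hinv : (1 - 12 * l ^ 2)⁻¹ ≤ 1 + 16 * l ^ 2 := by
    rw [inv_le_iff_one_le_mul₀ hK]
    nlinarith [mul_nonneg (sq_nonneg l) (show 0 ≤ 1 - 48 * l ^ 2 by nlinarith)]
  have hlog := one_sub_inv_le_log_of_pos hK
  rw [mismatchLogMGF]
  linarith

theorem exists_exp_le_mismatch_bound {s n : ℝ} (hs : 0 ≤ s) (hn : 0 ≤ n) :
    ∃ l, 0 ≤ l ∧ l ≤ 1 / 8 ∧
      exp (-(l * s / 2) + 8 * n * l ^ 2) ≤ exp (-s / 64) + 2 * exp (-s ^ 2 / (256 * n)) := by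
  rcases hn.eq_or_lt with rfl | hn
  · refine ⟨0, le_rfl, by norm_num, ?_⟩
    simp only [zero_mul, neg_zero, zero_div, mul_zero, add_zero, div_zero, exp_zero]
    linarith [exp_pos (-s / 64)]
  rcases le_or_gt s (4 * n) with hsmall | hlarge
  -- `s / (32 n)` minimizes the exponent `-(l s / 2) + 8 n l²`.
  · refine ⟨s / (32 * n), by positivity, by rw [div_le_iff₀ (by positivity)]; linarith, ?_⟩
    have hexponent : -(s / (32 * n) * s / 2) + 8 * n * (s / (32 * n)) ^ 2
        = 2 * (-s ^ 2 / (256 * n)) := by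
      field_simp
      ring
    have hnonpos : -s ^ 2 / (256 * n) ≤ 0 := by
      rw [neg_div]; exact neg_nonpos.2 (by positivity)
    rw [hexponent]
    calc exp (2 * (-s ^ 2 / (256 * n))) ≤ exp (-s ^ 2 / (256 * n)) := exp_le_exp.2 (by linarith)
      _ ≤ _ := by linarith [exp_pos (-s / 64), exp_pos (-s ^ 2 / (256 * n))]
  · refine ⟨1 / 8, by norm_num, le_rfl, ?_⟩
    calc exp (-(1 / 8 * s / 2) + 8 * n * (1 / 8) ^ 2) ≤ exp (-s / 64) :=
          exp_le_exp.2 (by linarith)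
      _ ≤ _ := le_add_of_nonneg_right (by positivity)

theorem mismatch_explicit_bound_general {Ω : Type*} [MeasurableSpace Ω] (P : Measure Ω)
    [IsProbabilityMeasure P] (d : ℕ) (μ Δ : Fin d → ℝ)
    (X Y Z : Ω → Fin d → ℝ)
    (hX : Measurable X) (hY : Measurable Y) (hZ : Measurable Z)
    (hXd : P.map X = gaussianPi μ 1)
    (hYd : P.map Y = gaussianPi μ 1)
    (hZd : P.map Z = gaussianPi (fun i => μ i + Δ i) 1)
    (hXY : IndepFun X Y P)
    (hXYZ : IndepFun (fun ω => (X ω, Y ω)) Z P) :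
    (P {ω | ∑ i, (Z ω i - X ω i) ^ 2 ≤ ∑ i, (Y ω i - X ω i) ^ 2}).toReal
      ≤ Real.exp (-(∑ i, (Δ i) ^ 2) / 64)
        + 2 * Real.exp (-(∑ i, (Δ i) ^ 2) ^ 2 / (256 * d)) := by
  set s := ∑ i, Δ i ^ 2
  obtain ⟨l, hl0, hl, hbound⟩ :=
    exists_exp_le_mismatch_bound (by positivity : 0 ≤ s) d.cast_nonneg
  have hlaw : P.map (fun ω => ((X ω, Y ω), Z ω)) = _ :=
    map_prod_prod_eq_of_indepFun hX.aemeasurable hY.aemeasurable hZ.aemeasurable hXY hXYZ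
  rw [hXd, hYd, hZd] at hlaw
  unfold gaussianPi at hlaw
  refine ENNReal.toReal_le_of_le_ofReal (by positivity) ?_
  calc P {ω | ∑ i, (Z ω i - X ω i) ^ 2 ≤ ∑ i, (Y ω i - X ω i) ^ 2}
      ≤ ∫⁻ ω, ENNReal.ofReal
          (exp (l * (∑ i, (Y ω i - X ω i) ^ 2 - ∑ i, (Z ω i - X ω i) ^ 2))) ∂P :=
        measure_le_le_lintegral_exp P (by fun_prop) (by fun_prop) hl0
    _ = ENNReal.ofReal (exp (∑ i, mismatchLogMGF l (Δ i))) := by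
        rw [← lintegral_ofReal_exp_mismatch_pi (by nlinarith) μ Δ, ← hlaw,
          lintegral_map (by fun_prop) (by fun_prop)]
    _ ≤ ENNReal.ofReal (exp (-(l * s / 2) + 8 * d * l ^ 2)) := by
        gcongr
        calc ∑ i, mismatchLogMGF l (Δ i) ≤ ∑ i, (-(l * Δ i ^ 2 / 2) + 8 * l ^ 2) :=
              Finset.sum_le_sum fun i _ => mismatchLogMGF_le hl0 hl _
          _ = _ := by
              simp only [Finset.sum_add_distrib, Finset.sum_neg_distrib, Finset.sum_const,
                Finset.card_univ, Fintype.card_fin, nsmul_eq_mul, Finset.mul_sum, Finset.sum_div,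
                s]
              ring
    _ ≤ _ := ENNReal.ofReal_le_ofReal hbound

/-- For `Δ ≠ 0`, independent `X, Y ~ N(μ, I_d)` and `Z ~ N(μ+Δ, I_d)` independent of
`(X, Y)`, the mismatch probability satisfies
`P(‖Z−X‖² ≤ ‖Y−X‖²) ≤ exp(−‖Δ‖²/64) + 2·exp(−‖Δ‖⁴/(256·d))`. -/
theorem mismatch_explicit_bound {Ω : Type*} [MeasurableSpace Ω] (P : Measure Ω)
    [IsProbabilityMeasure P] (d : ℕ) (hd : 0 < d) (μ Δ : Fin d → ℝ) (hΔ : Δ ≠ 0)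
    (X Y Z : Ω → Fin d → ℝ)
    (hX : Measurable X) (hY : Measurable Y) (hZ : Measurable Z)
    (hXd : P.map X = gaussianPi μ 1)
    (hYd : P.map Y = gaussianPi μ 1)
    (hZd : P.map Z = gaussianPi (fun i => μ i + Δ i) 1)
    (hXY : IndepFun X Y P)
    (hXYZ : IndepFun (fun ω => (X ω, Y ω)) Z P) :
    (P {ω | ∑ i, (Z ω i - X ω i) ^ 2 ≤ ∑ i, (Y ω i - X ω i) ^ 2}).toReal
      ≤ Real.exp (-(∑ i, (Δ i) ^ 2) / 64)
        + 2 * Real.exp (-(∑ i, (Δ i) ^ 2) ^ 2 / (256 * d)) :=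
  mismatch_explicit_bound_general P d μ Δ X Y Z hX hY hZ hXd hYd hZd hXY hXYZ
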